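/- There exists a constant C > 0 such that for all positive integers ℓ, ℓ', l̄ satisfying the triangle inequalities ℓ ≤ ℓ' + l̄, ℓ' ≤ ℓ + l̄, l̄ ≤ ℓ + ℓ' and such that L := ℓ + ℓ' + l̄ is odd, it holds |P(ℓ, ℓ', l̄)| ≤ C · (L · L₁ · L₂ · L₃)^{1/4}, where L₁ := L - 2ℓ, L₂ := L - 2ℓ', L₃ := L - 2l̄. -/

import Mathlib

/-! Write `ℓ = a + b + 1`, `ℓ' = a + c + 1`, `l̄ = b + c + 1`; this parametrizes exactly
the admissible triples, and then `L = 2(a + b + c) + 3`, `L₁ = 2c + 1`, `L₂ = 2b + 1`,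
`L₃ = 2a + 1`. Splitting every factorial into a central binomial coefficient and squared
factorials gives `P² · C(2m, m) = 4 ∏ₓ (2x + 1) C(2x, x)` over `x ∈ {a, b, c}`, with
`m = a + b + c + 2`. Stirling's formula is replaced by the Wallis-type bounds
`16ⁿ / (4n) ≤ C(2n, n)² ≤ 16ⁿ / (n + 1)`, which give `P⁴ ≤ 16 · L L₁ L₂ L₃`. -/

/-- `Δ(ℓ, ℓ', l̄) := sqrt((ℓ+ℓ'-l̄)! (ℓ-ℓ'+l̄)! (-ℓ+ℓ'+l̄)! / (ℓ+ℓ'+l̄+1)!)`. -/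
noncomputable def Δ (l l' lb : ℕ) : ℝ :=
  Real.sqrt (((l + l' - lb).factorial * (l + lb - l').factorial * (l' + lb - l).factorial : ℝ)
    / ((l + l' + lb + 1).factorial : ℝ))

/-- The factor `P(ℓ, ℓ', l̄)` appearing in the explicit formula for the structure constants
of the spherical harmonics with respect to the Poisson bracket on the sphere (for
`L := ℓ+ℓ'+l̄` odd). -/
noncomputable def P (l l' lb : ℕ) : ℝ :=
  (-1 : ℝ) ^ ((l + l' - lb + 1) / 2) * Δ l l' lb * ((l + l' + lb : ℝ) + 1) *
    (((l + l' + lb - 1) / 2).factorial : ℝ) /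
      ((((l' + lb - l - 1) / 2).factorial : ℝ) * (((l + lb - l' - 1) / 2).factorial : ℝ) *
        (((l + l' - lb - 1) / 2).factorial : ℝ))

open Nat

namespace Nat

theorem centralBinom_sq_mul_succ_le_sixteen_pow (n : ℕ) :
    n.centralBinom ^ 2 * (n + 1) ≤ 16 ^ n := by
  induction n with
  | zero => simp
  | succ n ih =>
    refine Nat.le_of_mul_le_mul_left ?_ (by positivity : 0 < (n + 1) ^ 3)
    calc (n + 1) ^ 3 * ((n + 1).centralBinom ^ 2 * (n + 1 + 1))
        = ((n + 1) * (n + 1).centralBinom) ^ 2 * ((n + 2) * (n + 1)) := by ring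
      _ = (4 * (2 * n + 1) ^ 2 * (n + 2)) * (n.centralBinom ^ 2 * (n + 1)) := by
        rw [succ_mul_centralBinom_succ]; ring
      _ ≤ (16 * (n + 1) ^ 3) * 16 ^ n := Nat.mul_le_mul (by nlinarith) ih
      _ = (n + 1) ^ 3 * 16 ^ (n + 1) := by ring

theorem sixteen_pow_le_four_mul_self_mul_centralBinom_sq {n : ℕ} (hn : 0 < n) :
    16 ^ n ≤ 4 * n * n.centralBinom ^ 2 := by
  induction n with
  | zero => omega
  | succ n ih =>
    rcases n.eq_zero_or_pos with rfl | hn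
    · simp [centralBinom, choose]
    refine Nat.le_of_mul_le_mul_left ?_ (by positivity : 0 < n * (n + 1) ^ 2)
    calc n * (n + 1) ^ 2 * 16 ^ (n + 1)
        = (16 * n * (n + 1) ^ 2) * 16 ^ n := by ring
      _ ≤ (16 * n * (n + 1) ^ 2) * (4 * n * n.centralBinom ^ 2) := by gcongr; exact ih hn
      _ = (64 * n ^ 2 * (n + 1) ^ 2) * n.centralBinom ^ 2 := by ring
      _ ≤ (16 * n * (n + 1) * (2 * n + 1) ^ 2) * n.centralBinom ^ 2 := by
        gcongr ?_ * _; nlinarith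
      _ = (4 * n * (n + 1)) * (2 * (2 * n + 1) * n.centralBinom) ^ 2 := by ring
      _ = n * (n + 1) ^ 2 * (4 * (n + 1) * (n + 1).centralBinom ^ 2) := by
        rw [← succ_mul_centralBinom_succ]; ring

theorem centralBinom_mul_factorial_sq (n : ℕ) : n.centralBinom * n ! ^ 2 = (2 * n)! := by
  rw [centralBinom_eq_two_mul_choose, sq, ← mul_assoc,
    ← choose_mul_factorial_mul_factorial (by omega : n ≤ 2 * n), two_mul, Nat.add_sub_cancel]

theorem two_mul_add_one_mul_centralBinom_sq_le (n : ℕ) :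
    ((2 * n + 1) * n.centralBinom) ^ 2 ≤ 2 * (2 * n + 1) * 16 ^ n :=
  calc ((2 * n + 1) * n.centralBinom) ^ 2 = (2 * n + 1) ^ 2 * n.centralBinom ^ 2 := by ring
    _ ≤ 2 * (2 * n + 1) * (n + 1) * n.centralBinom ^ 2 := by gcongr ?_ * _; nlinarith
    _ ≤ 2 * (2 * n + 1) * 16 ^ n := by
      rw [mul_assoc _ (n + 1), mul_comm (n + 1)]
      exact Nat.mul_le_mul_left _ (centralBinom_sq_mul_succ_le_sixteen_pow n)

theorem eight_mul_sixteen_pow_le_mul_centralBinom_sq (n : ℕ) :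
    8 * 16 ^ n ≤ (2 * n + 3) * (n + 2).centralBinom ^ 2 := by
  have h := sixteen_pow_le_four_mul_self_mul_centralBinom_sq (n := n + 2) (by omega)
  rw [pow_add] at h
  nlinarith

theorem prod_odd_mul_centralBinom_sq_le (a b c : ℕ) :
    ((2 * a + 1) * (2 * b + 1) * (2 * c + 1) *
        (a.centralBinom * b.centralBinom * c.centralBinom)) ^ 2 ≤
      (2 * (a + b + c) + 3) * (2 * a + 1) * (2 * b + 1) * (2 * c + 1) *
        (a + b + c + 2).centralBinom ^ 2 :=
  calc _ = ((2 * a + 1) * a.centralBinom) ^ 2 * ((2 * b + 1) * b.centralBinom) ^ 2 *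
        ((2 * c + 1) * c.centralBinom) ^ 2 := by ring
    _ ≤ (2 * (2 * a + 1) * 16 ^ a) * (2 * (2 * b + 1) * 16 ^ b) *
        (2 * (2 * c + 1) * 16 ^ c) := by
      gcongr <;> apply two_mul_add_one_mul_centralBinom_sq_le
    _ = (2 * a + 1) * (2 * b + 1) * (2 * c + 1) * (8 * 16 ^ (a + b + c)) := by ring
    _ ≤ (2 * a + 1) * (2 * b + 1) * (2 * c + 1) *
        ((2 * (a + b + c) + 3) * (a + b + c + 2).centralBinom ^ 2) :=
      Nat.mul_le_mul_left _ (eight_mul_sixteen_pow_le_mul_centralBinom_sq _)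
    _ = _ := by ring

end Nat

theorem abs_le_mul_rpow_quarter {p c x : ℝ} (hc : 0 ≤ c) (hx : 0 ≤ x)
    (h : p ^ 4 ≤ c ^ 4 * x) :
    |p| ≤ c * x ^ ((1 : ℝ) / 4) := by
  have hx4 : (x ^ ((1 : ℝ) / 4)) ^ 4 = x := by
    rw [one_div]; exact_mod_cast Real.rpow_inv_natCast_pow hx four_ne_zero
  refine (pow_le_pow_iff_left₀ (abs_nonneg p) (by positivity) four_ne_zero).mp ?_
  rwa [pow_abs, abs_of_nonneg (by positivity), mul_pow, hx4]

theorem P_sq_mul_centralBinom (a b c : ℕ) :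
    P (a + b + 1) (a + c + 1) (b + c + 1) ^ 2 * (a + b + c + 2).centralBinom =
      4 * ((2 * a + 1) * (2 * b + 1) * (2 * c + 1) *
        (a.centralBinom * b.centralBinom * c.centralBinom) : ℕ) := by
  have hm : a + b + 1 + (a + c + 1) + (b + c + 1) + 1 = 2 * (a + b + c + 2) := by omega
  have hfact (n : ℕ) : ((2 * n + 1)! : ℝ) = (2 * n + 1) * n.centralBinom * n ! ^ 2 := by
    rw [factorial_succ, ← centralBinom_mul_factorial_sq]; push_cast; ring
  rw [P, Δ, div_pow, mul_pow, mul_pow, mul_pow, ← pow_mul, pow_mul', neg_one_sq, one_pow,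
    one_mul, Real.sq_sqrt (by positivity)]
  simp only [show a + b + 1 + (a + c + 1) - (b + c + 1) = 2 * a + 1 by omega,
    show a + b + 1 + (b + c + 1) - (a + c + 1) = 2 * b + 1 by omega,
    show a + c + 1 + (b + c + 1) - (a + b + 1) = 2 * c + 1 by omega,
    show (a + b + 1 + (a + c + 1) + (b + c + 1) - 1) / 2 = a + b + c + 1 by omega,
    show (2 * a + 1 - 1) / 2 = a by omega, show (2 * b + 1 - 1) / 2 = b by omega,
    show (2 * c + 1 - 1) / 2 = c by omega, hm, hfact, ← centralBinom_mul_factorial_sq,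
    factorial_succ (a + b + c + 1)]
  have hcb : ((a + b + c + 2).centralBinom : ℝ) ≠ 0 := mod_cast centralBinom_ne_zero _
  push_cast
  field_simp
  ring

theorem P_pow_four_le (a b c : ℕ) :
    P (a + b + 1) (a + c + 1) (b + c + 1) ^ 4
      ≤ 2 ^ 4 * ((2 * (a + b + c) + 3) * (2 * c + 1) * (2 * b + 1) * (2 * a + 1) : ℕ) := by
  have hcb : (0 : ℝ) < (a + b + c + 2).centralBinom := mod_cast centralBinom_pos _
  refine le_of_mul_le_mul_right ?_ (pow_pos hcb 2)
  calc P (a + b + 1) (a + c + 1) (b + c + 1) ^ 4 * (a + b + c + 2).centralBinom ^ 2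
      = (P (a + b + 1) (a + c + 1) (b + c + 1) ^ 2 * (a + b + c + 2).centralBinom) ^ 2 := by ring
    _ = 2 ^ 4 * ((((2 * a + 1) * (2 * b + 1) * (2 * c + 1) *
        (a.centralBinom * b.centralBinom * c.centralBinom)) ^ 2 : ℕ) : ℝ) := by
      rw [P_sq_mul_centralBinom]; push_cast; ring
    _ ≤ 2 ^ 4 * (((2 * (a + b + c) + 3) * (2 * a + 1) * (2 * b + 1) * (2 * c + 1) *
        (a + b + c + 2).centralBinom ^ 2 : ℕ) : ℝ) := by
      gcongr; exact_mod_cast prod_odd_mul_centralBinom_sq_le a b c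
    _ = _ := by push_cast; ring

/-- Stirling-approximation bound: there is a constant `C > 0` such that for all positive
integers `ℓ, ℓ', l̄` satisfying the triangle inequalities with `L := ℓ+ℓ'+l̄` odd,
`|P(ℓ, ℓ', l̄)| ≤ C · (L·L₁·L₂·L₃)^{1/4}` where `L₁ = L-2ℓ`, `L₂ = L-2ℓ'`, `L₃ = L-2l̄`. -/
theorem P_bound_quarter_power : ∃ C : ℝ, 0 < C ∧ ∀ l l' lb : ℕ, 0 < l → 0 < l' → 0 < lb →
    l ≤ l' + lb → l' ≤ l + lb → lb ≤ l + l' → Odd (l + l' + lb) →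
    |P l l' lb| ≤ C * (((l + l' + lb) * (l + l' + lb - 2 * l) * (l + l' + lb - 2 * l') *
      (l + l' + lb - 2 * lb) : ℕ) : ℝ) ^ ((1 : ℝ) / 4) := by
  refine ⟨2, two_pos, fun l l' lb _ _ _ h₁ h₂ h₃ ⟨k, hk⟩ ↦ ?_⟩
  obtain ⟨a, b, c, rfl, rfl, rfl⟩ : ∃ a b c, l = a + b + 1 ∧ l' = a + c + 1 ∧ lb = b + c + 1 :=
    ⟨(l + l' - lb) / 2, (l + lb - l') / 2, (l' + lb - l) / 2, by omega, by omega, by omega⟩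
  rw [show a + b + 1 + (a + c + 1) + (b + c + 1) = 2 * (a + b + c) + 3 by ring,
    show 2 * (a + b + c) + 3 - 2 * (a + b + 1) = 2 * c + 1 by omega,
    show 2 * (a + b + c) + 3 - 2 * (a + c + 1) = 2 * b + 1 by omega,
    show 2 * (a + b + c) + 3 - 2 * (b + c + 1) = 2 * a + 1 by omega]
  exact abs_le_mul_rpow_quarter zero_le_two (Nat.cast_nonneg _) (P_pow_four_le a b c)
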